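/- arXiv:2006.12432 — 4 statements merged into one kernel-verified Lean document; each statement's English description precedes it below -/
import Mathlib

section
/- Let I, R, O be finite types, let β : I → O → ℝ have nonnegative entries with ∑_{o} β i o = 1 for every i, and let θ : (O × R) → (R × I) → ℝ have nonnegative entries with ∑_{(r,i)} θ (o',r') (r,i) = 1 for every (o',r'). Define the global process σ : (I × R × O) → (I × R × O) → ℝ by σ (i',r',o') (i,r,o) = β i' o · θ (o',r') (r,i). Let ω : I × R × O → ℝ be a stationary distribution for σ, i.e. ω is nonnegative, ∑ ω = 1, and ω (i,r,o) = ∑_{(i',r',o')} σ (i',r',o') (i,r,o) · ω (i',r',o') for all (i,r,o). Define ω_I(i) = ∑_{(r,o)} ω (i,r,o), ω_O(o) = ∑_{(i,r)} ω (i,r,o), and δ_β(i,o) = β i o · ω_I(i). Then the marginal of δ_β over the output variables equals ω_O: for every o, ∑_{i} δ_β(i,o) = ω_O(o). -/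
lemma sum_rot {A B C M : Type*} [Fintype A] [Fintype B] [Fintype C] [AddCommMonoid M]
    (f : A → B → C → M) :
    ∑ a, ∑ b, ∑ c, f a b c = ∑ c, ∑ a, ∑ b, f a b c :=
  calc ∑ a, ∑ b, ∑ c, f a b c
      = ∑ a, ∑ c, ∑ b, f a b c :=
        Finset.sum_congr rfl fun a _ => Finset.sum_comm (f := fun b c => f a b c)
    _ = ∑ c, ∑ a, ∑ b, f a b c :=
        Finset.sum_comm (f := fun a c => ∑ b, f a b c)

lemma sum_swap2 {A B M : Type*} [Fintype A] [Fintype B] [AddCommMonoid M]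
    (f : A → B → M) : ∑ a, ∑ b, f a b = ∑ b, ∑ a, f a b :=
  Finset.sum_comm (f := f)


/-- Theorem 1 (second half): the marginal of the node distribution `δβ` over the
output variables equals the output marginal `ωO` of the stationary distribution. -/
theorem node_distribution_output_marginal
    {I R O : Type*} [Fintype I] [Fintype R] [Fintype O]
    (β : I → O → ℝ) (hβ0 : ∀ i o, 0 ≤ β i o) (hβ1 : ∀ i, ∑ o, β i o = 1)
    (θ : O × R → R × I → ℝ) (hθ0 : ∀ p q, 0 ≤ θ p q)
    (hθ1 : ∀ p, ∑ q : R × I, θ p q = 1)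
    (σ : I × R × O → I × R × O → ℝ)
    (hσ : ∀ i' r' o' i r o, σ (i', r', o') (i, r, o) = β i' o * θ (o', r') (r, i))
    (ω : I × R × O → ℝ) (hω0 : ∀ s, 0 ≤ ω s) (hω1 : ∑ s, ω s = 1)
    (hstat : ∀ i r o, ω (i, r, o) = ∑ s' : I × R × O, σ s' (i, r, o) * ω s')
    (ωI : I → ℝ) (hωI : ∀ i, ωI i = ∑ r, ∑ o, ω (i, r, o))
    (ωO : O → ℝ) (hωO : ∀ o, ωO o = ∑ i, ∑ r, ω (i, r, o))
    (δβ : I → O → ℝ) (hδβ : ∀ i o, δβ i o = β i o * ωI i) :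
    ∀ o, ∑ i, δβ i o = ωO o := by
  intro o
  have key : ωO o = ∑ s' : I × R × O, β s'.1 o * ω s' := by
    rw [hωO]
    calc ∑ i, ∑ r, ω (i, r, o)
        = ∑ i, ∑ r, ∑ s' : I × R × O, σ s' (i, r, o) * ω s' := by
          simp_rw [← hstat]
      _ = ∑ s' : I × R × O, ∑ i, ∑ r, σ s' (i, r, o) * ω s' := by
          exact sum_rot fun i r s' => σ s' (i, r, o) * ω s'
      _ = ∑ s' : I × R × O, β s'.1 o * ω s' := by
          refine Finset.sum_congr rfl fun s' _ => ?_
          obtain ⟨i', r', o'⟩ := s'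
          simp_rw [hσ]
          have h1 := hθ1 (o', r')
          rw [Fintype.sum_prod_type] at h1
          have : ∑ i, ∑ r, β i' o * θ (o', r') (r, i) * ω (i', r', o')
              = β i' o * ω (i', r', o') * ∑ r, ∑ i, θ (o', r') (r, i) := by
            rw [sum_swap2 fun i r => β i' o * θ (o', r') (r, i) * ω (i', r', o'),
              Finset.mul_sum]
            refine Finset.sum_congr rfl fun r _ => ?_
            rw [Finset.mul_sum]
            exact Finset.sum_congr rfl fun i _ => by ring
          rw [this, h1, mul_one]
  rw [key, Fintype.sum_prod_type]
  refine Finset.sum_congr rfl fun i _ => ?_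
  rw [hδβ, hωI]
  simp_rw [Fintype.sum_prod_type, Finset.mul_sum]
end

section
/- Let A, S, P, Q, B, R be finite types. Let α : A → (S × P) → ℝ, β : (S × Q) → B → ℝ, and θ : (P × B × R) → (A × Q × R) → ℝ be row-stochastic matrices (nonnegative entries, each row summing to 1). Define the global process σ on the state space A × S × P × Q × B × R by σ (a',s',p',q',b',r') (a,s,p,q,b,r) = α a' (s,p) · β (s',q') b · θ (p',b',r') (a,q,r). Let ω be a stationary distribution for σ (ω nonnegative, ∑ ω = 1, and ω t = ∑_{t'} σ t' t · ω t' for all states t). Define ω_A(a) as the marginal of ω on A, ω_{SQ}(s,q) as the marginal of ω on S × Q, ω_S(s) as the marginal of ω on S, δ_α(a,s,p) = α a (s,p) · ω_A(a), and δ_β(s,q,b) = β (s,q) b · ω_{SQ}(s,q). Then for every s ∈ S: ∑_{(a,p)} δ_α(a,s,p) = ω_S(s) = ∑_{(q,b)} δ_β(s,q,b); in particular the marginals of δ_α and δ_β over the shared variables S coincide. -/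
private lemma sum_comm_out5 {X1 X2 X3 X4 X5 T : Type*} [Fintype X1] [Fintype X2]
    [Fintype X3] [Fintype X4] [Fintype X5] [Fintype T]
    (f : X1 → X2 → X3 → X4 → X5 → T → ℝ) :
    (∑ x1, ∑ x2, ∑ x3, ∑ x4, ∑ x5, ∑ t, f x1 x2 x3 x4 x5 t)
      = ∑ t, ∑ x1, ∑ x2, ∑ x3, ∑ x4, ∑ x5, f x1 x2 x3 x4 x5 t := by
  calc (∑ x1, ∑ x2, ∑ x3, ∑ x4, ∑ x5, ∑ t, f x1 x2 x3 x4 x5 t)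
      = ∑ x1, ∑ x2, ∑ x3, ∑ x4, ∑ t, ∑ x5, f x1 x2 x3 x4 x5 t := by
        refine Finset.sum_congr rfl fun _ _ => Finset.sum_congr rfl fun _ _ =>
          Finset.sum_congr rfl fun _ _ => Finset.sum_congr rfl fun _ _ => Finset.sum_comm
    _ = ∑ x1, ∑ x2, ∑ x3, ∑ t, ∑ x4, ∑ x5, f x1 x2 x3 x4 x5 t := by
        refine Finset.sum_congr rfl fun _ _ => Finset.sum_congr rfl fun _ _ =>
          Finset.sum_congr rfl fun _ _ => Finset.sum_comm
    _ = ∑ x1, ∑ x2, ∑ t, ∑ x3, ∑ x4, ∑ x5, f x1 x2 x3 x4 x5 t := by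
        refine Finset.sum_congr rfl fun _ _ => Finset.sum_congr rfl fun _ _ =>
          Finset.sum_comm
    _ = ∑ x1, ∑ t, ∑ x2, ∑ x3, ∑ x4, ∑ x5, f x1 x2 x3 x4 x5 t := by
        refine Finset.sum_congr rfl fun _ _ => Finset.sum_comm
    _ = ∑ t, ∑ x1, ∑ x2, ∑ x3, ∑ x4, ∑ x5, f x1 x2 x3 x4 x5 t := Finset.sum_comm

/-- Theorem 2 (no-signalling): the marginals over the shared variables `S` of the
node distributions `δα` and `δβ` both equal the marginal `ωS` of the stationary
distribution, hence they coincide. -/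
theorem no_signalling_empirical_model
    {A S P Q B R : Type*} [Fintype A] [Fintype S] [Fintype P] [Fintype Q]
    [Fintype B] [Fintype R]
    (α : A → S × P → ℝ) (hα0 : ∀ a sp, 0 ≤ α a sp) (hα1 : ∀ a, ∑ sp : S × P, α a sp = 1)
    (β : S × Q → B → ℝ) (hβ0 : ∀ sq b, 0 ≤ β sq b) (hβ1 : ∀ sq, ∑ b, β sq b = 1)
    (θ : P × B × R → A × Q × R → ℝ) (hθ0 : ∀ u v, 0 ≤ θ u v)
    (hθ1 : ∀ u, ∑ v : A × Q × R, θ u v = 1)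
    (σ : A × S × P × Q × B × R → A × S × P × Q × B × R → ℝ)
    (hσ : ∀ a' s' p' q' b' r' a s p q b r,
      σ (a', s', p', q', b', r') (a, s, p, q, b, r) =
        α a' (s, p) * β (s', q') b * θ (p', b', r') (a, q, r))
    (ω : A × S × P × Q × B × R → ℝ) (hω0 : ∀ t, 0 ≤ ω t) (hω1 : ∑ t, ω t = 1)
    (hstat : ∀ t, ω t = ∑ t', σ t' t * ω t')
    (ωA : A → ℝ) (hωA : ∀ a, ωA a = ∑ s, ∑ p, ∑ q, ∑ b, ∑ r, ω (a, s, p, q, b, r))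
    (ωSQ : S → Q → ℝ)
    (hωSQ : ∀ s q, ωSQ s q = ∑ a, ∑ p, ∑ b, ∑ r, ω (a, s, p, q, b, r))
    (ωS : S → ℝ) (hωS : ∀ s, ωS s = ∑ a, ∑ p, ∑ q, ∑ b, ∑ r, ω (a, s, p, q, b, r))
    (δα : A → S → P → ℝ) (hδα : ∀ a s p, δα a s p = α a (s, p) * ωA a)
    (δβ : S → Q → B → ℝ) (hδβ : ∀ s q b, δβ s q b = β (s, q) b * ωSQ s q) :
    ∀ s, (∑ a, ∑ p, δα a s p) = ωS s ∧ ωS s = ∑ q, ∑ b, δβ s q b := by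
  intro s
  have hθ' : ∀ p' b' r', (∑ a : A, ∑ q : Q, ∑ r : R, θ (p', b', r') (a, q, r)) = 1 := by
    intro p' b' r'
    simpa [Fintype.sum_prod_type] using hθ1 (p', b', r')
  constructor
  · -- key: collapsing of σ rows
    have key : ∀ a' s' p' q' b' r',
        (∑ a, ∑ p, ∑ q, ∑ b, ∑ r, σ (a', s', p', q', b', r') (a, s, p, q, b, r))
          = ∑ p, α a' (s, p) := by
      intro a' s' p' q' b' r'
      simp only [hσ]
      calc (∑ a, ∑ p, ∑ q, ∑ b, ∑ r,
              α a' (s, p) * β (s', q') b * θ (p', b', r') (a, q, r))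
          = ∑ a, ∑ p, α a' (s, p) * ∑ q, ∑ b, ∑ r,
              β (s', q') b * θ (p', b', r') (a, q, r) := by
            refine Finset.sum_congr rfl fun a _ => Finset.sum_congr rfl fun p _ => ?_
            simp only [Finset.mul_sum, mul_assoc]
        _ = ∑ a, ∑ p, α a' (s, p) * ∑ q, ∑ r, θ (p', b', r') (a, q, r) := by
            refine Finset.sum_congr rfl fun a _ => Finset.sum_congr rfl fun p _ => ?_
            congr 1
            refine Finset.sum_congr rfl fun q _ => ?_
            calc (∑ b, ∑ r, β (s', q') b * θ (p', b', r') (a, q, r))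
                = ∑ b, β (s', q') b * ∑ r, θ (p', b', r') (a, q, r) := by
                  simp only [Finset.mul_sum]
              _ = (∑ b, β (s', q') b) * ∑ r, θ (p', b', r') (a, q, r) := by
                  rw [Finset.sum_mul]
              _ = ∑ r, θ (p', b', r') (a, q, r) := by rw [hβ1, one_mul]
        _ = ∑ a, (∑ p, α a' (s, p)) * ∑ q, ∑ r, θ (p', b', r') (a, q, r) := by
            refine Finset.sum_congr rfl fun a _ => ?_
            rw [Finset.sum_mul]
        _ = (∑ p, α a' (s, p)) * ∑ a, ∑ q, ∑ r, θ (p', b', r') (a, q, r) := by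
            rw [Finset.mul_sum]
        _ = ∑ p, α a' (s, p) := by rw [hθ' p' b' r', mul_one]
    calc (∑ a, ∑ p, δα a s p)
        = ∑ a, (∑ p, α a (s, p)) * ωA a := by
          refine Finset.sum_congr rfl fun a _ => ?_
          simp only [hδα]
          rw [Finset.sum_mul]
      _ = ∑ t' : A × S × P × Q × B × R, (∑ p, α t'.1 (s, p)) * ω t' := by
          simp only [Fintype.sum_prod_type, hωA, Finset.mul_sum]
      _ = ∑ t' : A × S × P × Q × B × R,
            (∑ a, ∑ p, ∑ q, ∑ b, ∑ r, σ t' (a, s, p, q, b, r)) * ω t' := by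
          refine Finset.sum_congr rfl fun t' _ => ?_
          obtain ⟨a', s', p', q', b', r'⟩ := t'
          rw [key]
      _ = ∑ t' : A × S × P × Q × B × R,
            ∑ a, ∑ p, ∑ q, ∑ b, ∑ r, σ t' (a, s, p, q, b, r) * ω t' := by
          simp only [Finset.sum_mul]
      _ = ∑ a, ∑ p, ∑ q, ∑ b, ∑ r,
            ∑ t' : A × S × P × Q × B × R, σ t' (a, s, p, q, b, r) * ω t' := by
          rw [sum_comm_out5 (fun a p q b r t' => σ t' (a, s, p, q, b, r) * ω t')]
      _ = ωS s := by
          rw [hωS]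
          refine Finset.sum_congr rfl fun a _ => Finset.sum_congr rfl fun p _ =>
            Finset.sum_congr rfl fun q _ => Finset.sum_congr rfl fun b _ =>
            Finset.sum_congr rfl fun r _ => ?_
          exact (hstat (a, s, p, q, b, r)).symm
  · calc ωS s
        = ∑ q, ∑ a, ∑ p, ∑ b, ∑ r, ω (a, s, p, q, b, r) := by
          rw [hωS]
          calc (∑ a, ∑ p, ∑ q, ∑ b, ∑ r, ω (a, s, p, q, b, r))
              = ∑ a, ∑ q, ∑ p, ∑ b, ∑ r, ω (a, s, p, q, b, r) :=
                Finset.sum_congr rfl fun a _ => Finset.sum_comm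
            _ = ∑ q, ∑ a, ∑ p, ∑ b, ∑ r, ω (a, s, p, q, b, r) := Finset.sum_comm
      _ = ∑ q, ωSQ s q := by
          refine Finset.sum_congr rfl fun q _ => (hωSQ s q).symm
      _ = ∑ q, ∑ b, δβ s q b := by
          refine Finset.sum_congr rfl fun q _ => ?_
          simp only [hδβ]
          rw [← Finset.sum_mul, hβ1, one_mul]
end

section
/- Define T : Bool⁴ → Bool⁴ by T (a₁,b₁,a₂,b₂) = (b₂, ¬a₁, b₁, a₂), and let σ s' s = 1 if s = T s' and 0 otherwise. Then T is a bijection of Bool⁴ and the uniform distribution ω (a₁,b₁,a₂,b₂) = 1/16 is stationary for σ: for every state s, ∑_{s'} σ s' s · ω s' = ω s. Moreover each single-variable marginal of ω equals 1/2, and consequently the node distributions δ₁₁ (a₁,b₁) = (if a₁ = ¬b₁ then 1 else 0) · (1/2), δ₂₁ (b₁,a₂) = (if b₁ = a₂ then 1 else 0) · (1/2), δ₂₂ (a₂,b₂) = (if a₂ = b₂ then 1 else 0) · (1/2), δ₁₂ (b₂,a₁) = (if b₂ = a₁ then 1 else 0) · (1/2) attached to the four nodes satisfy: δ₁₁(a₁,b₁)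 = 1/2 iff a₁ ≠ b₁ (else 0), δ₂₁(b₁,a₂) = 1/2 iff b₁ = a₂ (else 0), δ₂₂(a₂,b₂) = 1/2 iff a₂ = b₂ (else 0), δ₁₂(b₂,a₁) = 1/2 iff b₂ = a₁ (else 0); i.e. the empirical model attached to the network is the Popescu–Rohrlich box. -/
/-- The CHSH network: the dynamics T(a₁,b₁,a₂,b₂) = (b₂, ¬a₁, b₁, a₂) is a
bijection, the uniform distribution is stationary for the associated permutation
matrix, each single-variable marginal is 1/2, and the node distributions realize
the Popescu–Rohrlich box. -/
theorem chsh_network_pr_box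
    (T : Bool × Bool × Bool × Bool → Bool × Bool × Bool × Bool)
    (hT : ∀ a₁ b₁ a₂ b₂, T (a₁, b₁, a₂, b₂) = (b₂, !a₁, b₁, a₂))
    (σ : Bool × Bool × Bool × Bool → Bool × Bool × Bool × Bool → ℝ)
    (hσ : ∀ s' s, σ s' s = if s = T s' then 1 else 0)
    (ω : Bool × Bool × Bool × Bool → ℝ)
    (hω : ∀ s, ω s = 1/16)
    (δ₁₁ : Bool → Bool → ℝ)
    (hδ₁₁ : ∀ a₁ b₁, δ₁₁ a₁ b₁ = (if a₁ = !b₁ then 1 else 0) * (1/2))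
    (δ₂₁ : Bool → Bool → ℝ)
    (hδ₂₁ : ∀ b₁ a₂, δ₂₁ b₁ a₂ = (if b₁ = a₂ then 1 else 0) * (1/2))
    (δ₂₂ : Bool → Bool → ℝ)
    (hδ₂₂ : ∀ a₂ b₂, δ₂₂ a₂ b₂ = (if a₂ = b₂ then 1 else 0) * (1/2))
    (δ₁₂ : Bool → Bool → ℝ)
    (hδ₁₂ : ∀ b₂ a₁, δ₁₂ b₂ a₁ = (if b₂ = a₁ then 1 else 0) * (1/2)) :
    Function.Bijective T ∧
    (∀ s, ∑ s', σ s' s * ω s' = ω s) ∧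
    (∀ a₁, (∑ b₁, ∑ a₂, ∑ b₂, ω (a₁, b₁, a₂, b₂)) = 1/2) ∧
    (∀ b₁, (∑ a₁, ∑ a₂, ∑ b₂, ω (a₁, b₁, a₂, b₂)) = 1/2) ∧
    (∀ a₂, (∑ a₁, ∑ b₁, ∑ b₂, ω (a₁, b₁, a₂, b₂)) = 1/2) ∧
    (∀ b₂, (∑ a₁, ∑ b₁, ∑ a₂, ω (a₁, b₁, a₂, b₂)) = 1/2) ∧
    (∀ a₁ b₁, δ₁₁ a₁ b₁ = if a₁ ≠ b₁ then 1/2 else 0) ∧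
    (∀ b₁ a₂, δ₂₁ b₁ a₂ = if b₁ = a₂ then 1/2 else 0) ∧
    (∀ a₂ b₂, δ₂₂ a₂ b₂ = if a₂ = b₂ then 1/2 else 0) ∧
    (∀ b₂ a₁, δ₁₂ b₂ a₁ = if b₂ = a₁ then 1/2 else 0) := by
  refine ⟨?_, ?_, ?_, ?_, ?_, ?_, ?_, ?_, ?_, ?_⟩
  · constructor
    · rintro ⟨a₁, b₁, a₂, b₂⟩ ⟨c₁, d₁, c₂, d₂⟩ h
      rw [hT, hT] at h
      simp only [Prod.mk.injEq] at h
      obtain ⟨h1, h2, h3, h4⟩ := h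
      simp_all [Bool.not_inj_iff]
    · rintro ⟨a₁, b₁, a₂, b₂⟩
      exact ⟨(!b₁, a₂, b₂, a₁), by rw [hT]; simp⟩
  · rintro ⟨a₁, b₁, a₂, b₂⟩
    simp only [hσ, hω, Fintype.sum_prod_type, hT, Fintype.sum_bool]
    cases a₁ <;> cases b₁ <;> cases a₂ <;> cases b₂ <;>
      simp [Prod.ext_iff] <;> norm_num
  · intro a₁; simp [hω, Fintype.sum_bool]; norm_num
  · intro b₁; simp [hω, Fintype.sum_bool]; norm_num
  · intro a₂; simp [hω, Fintype.sum_bool]; norm_num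
  · intro b₂; simp [hω, Fintype.sum_bool]; norm_num
  · intro a₁ b₁; rw [hδ₁₁]; cases a₁ <;> cases b₁ <;> norm_num
  · intro b₁ a₂; rw [hδ₂₁]; cases b₁ <;> cases a₂ <;> norm_num
  · intro a₂ b₂; rw [hδ₂₂]; cases a₂ <;> cases b₂ <;> norm_num
  · intro b₂ a₁; rw [hδ₁₂]; cases b₂ <;> cases a₁ <;> norm_num
end

section
/- There is no function p : Bool × Bool × Bool × Bool → ℝ (on quadruples (a₁,a₂,b₁,b₂)) with nonnegative values and total sum 1 such that: (i) for all a₁, b₁: ∑_{(a₂,b₂)} p(a₁,a₂,b₁,b₂) = 1/2 if a₁ ≠ b₁ and 0 otherwise; (ii) for all a₁, b₂: ∑_{(a₂,b₁)} p(a₁,a₂,b₁,b₂) = 1/2 if a₁ = b₂ and 0 otherwise; (iii) for all a₂, b₁: ∑_{(a₁,b₂)} p(a₁,a₂,b₁,b₂) = 1/2 if a₂ = b₁ and 0 otherwise; (iv) for all a₂, b₂: ∑_{(a₁,b₁)} p(a₁,a₂,b₁,b₂) = 1/2 if a₂ = b₂ and 0 otherwise. -/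
/-- The Popescu–Rohrlich box is contextual: no joint distribution on the four
Boolean observables has the four PR context distributions as its marginals. -/
theorem pr_box_contextual :
    ¬ ∃ p : Bool × Bool × Bool × Bool → ℝ,
      (∀ s, 0 ≤ p s) ∧ (∑ s, p s = 1) ∧
      (∀ a₁ b₁, (∑ a₂, ∑ b₂, p (a₁, a₂, b₁, b₂)) = if a₁ ≠ b₁ then 1/2 else 0) ∧
      (∀ a₁ b₂, (∑ a₂, ∑ b₁, p (a₁, a₂, b₁, b₂)) = if a₁ = b₂ then 1/2 else 0) ∧
      (∀ a₂ b₁, (∑ a₁, ∑ b₂, p (a₁, a₂, b₁, b₂)) = if a₂ = b₁ then 1/2 else 0) ∧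
      (∀ a₂ b₂, (∑ a₁, ∑ b₁, p (a₁, a₂, b₁, b₂)) = if a₂ = b₂ then 1/2 else 0) := by
  rintro ⟨p, hpos, hsum, h1, h2, h3, h4⟩
  have h1tt := h1 true true
  have h1ff := h1 false false
  have h2tf := h2 true false
  have h2ft := h2 false true
  have h3tf := h3 true false
  have h3ft := h3 false true
  have h4tf := h4 true false
  have h4ft := h4 false true
  simp only [Fintype.sum_prod_type, Fintype.sum_bool, ne_eq] at h1tt h1ff h2tf h2ft h3tf h3ft h4tf h4ft hsum
  norm_num at h1tt h1ff h2tf h2ft h3tf h3ft h4tf h4ft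
  have H := fun s => hpos s
  linarith [hpos (true,true,true,true), hpos (true,true,true,false), hpos (true,true,false,true),
    hpos (true,true,false,false), hpos (true,false,true,true), hpos (true,false,true,false),
    hpos (true,false,false,true), hpos (true,false,false,false), hpos (false,true,true,true),
    hpos (false,true,true,false), hpos (false,true,false,true), hpos (false,true,false,false),
    hpos (false,false,true,true), hpos (false,false,true,false), hpos (false,false,false,true),
    hpos (false,false,false,false)]
end
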